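/- Let {P_m}_{m≥1} be a bounded sequence of polynomials with bounds d, K, M. Then for every m ≥ 0, the topological boundary of the filled Julia set at time m equals the iterated Julia set at time m: ∂K_m = J_m. -/

import Mathlib

open Filter Topology Polynomial
open scoped OnePoint

/-!
Beyond the escape radius `R` every `P_n` at least doubles the modulus. Hence every escaping point
has a neighbourhood `{|Q_{m,n₀}| > R} ∪ {∞}` on which the iterates tend to `∞` uniformly, so the
basin `A_{∞,m}` is open and lies in the Fatou set. On the interior of `K_m` the iterates are
bounded by `R`, so Cauchy's estimates make them equicontinuous and Arzelà–Ascoli makes the family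
normal there. Finally, at a Fatou point of `∂K_m` a limit function would be `∞` at nearby escaping
points while the iterates stay bounded at the point itself, which a single continuous iterate
cannot reconcile. So `∂K_m = closure A_{∞,m} \ A_{∞,m} = J_m`.
-/

/-- The spherical (chordal) metric on the Riemann sphere `ℂ̂ = ℂ ∪ {∞}`. -/
noncomputable def sphDist : OnePoint ℂ → OnePoint ℂ → ℝ
  | (x : ℂ), (y : ℂ) => 2 * ‖x - y‖ /
      (Real.sqrt (1 + ‖x‖ ^ 2) * Real.sqrt (1 + ‖y‖ ^ 2))
  | (x : ℂ), ∞ => 2 / Real.sqrt (1 + ‖x‖ ^ 2)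
  | ∞, (y : ℂ) => 2 / Real.sqrt (1 + ‖y‖ ^ 2)
  | ∞, ∞ => 0

/-- A bounded sequence of polynomials with bounds `d`, `K`, `M`:
for every `m ≥ 1`, `2 ≤ deg P_m ≤ d`, `1/K ≤ |leading coeff| ≤ K` and all the
lower order coefficients have absolute value at most `M`. -/
def IsBoundedSeq (d : ℕ) (K M : ℝ) (P : ℕ → Polynomial ℂ) : Prop :=
  ∀ m, 1 ≤ m →
    2 ≤ (P m).natDegree ∧ (P m).natDegree ≤ d ∧
    1 / K ≤ ‖(P m).leadingCoeff‖ ∧ ‖(P m).leadingCoeff‖ ≤ K ∧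
    ∀ k, k < (P m).natDegree → ‖(P m).coeff k‖ ≤ M

/-- `Q_{m,n} = P_n ∘ ⋯ ∘ P_{m+1}` on `ℂ` (the identity when `n ≤ m`). -/
noncomputable def Qc (P : ℕ → Polynomial ℂ) (m n : ℕ) (z : ℂ) : ℂ :=
  (List.range (n - m)).foldl (fun w k => (P (m + k + 1)).eval w) z

/-- The extension of `Q_{m,n}` to the Riemann sphere, with `∞ ↦ ∞`. -/
noncomputable def Qhat (P : ℕ → Polynomial ℂ) (m n : ℕ) : OnePoint ℂ → OnePoint ℂ :=
  OnePoint.map (Qc P m n)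

/-- `f j → g` uniformly on compact subsets of `N`, with respect to the spherical metric. -/
def UnifConvOnCompacts (N : Set (OnePoint ℂ)) (f : ℕ → OnePoint ℂ → OnePoint ℂ)
    (g : OnePoint ℂ → OnePoint ℂ) : Prop :=
  ∀ C : Set (OnePoint ℂ), C ⊆ N → IsCompact C → ∀ ε > (0 : ℝ), ∃ j₀ : ℕ, ∀ j ≥ j₀,
    ∀ z ∈ C, sphDist (f j z) (g z) < ε

/-- The family `{Q_{m,n}}_{n ≥ m}` is normal on the open set `N`: every sequence from
the family has a subsequence converging locally uniformly on `N` with respect to the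
spherical metric. -/
def NormalOn (P : ℕ → Polynomial ℂ) (m : ℕ) (N : Set (OnePoint ℂ)) : Prop :=
  ∀ k : ℕ → ℕ, (∀ j, m ≤ k j) → ∃ s : ℕ → ℕ, StrictMono s ∧
    ∃ g : OnePoint ℂ → OnePoint ℂ,
      UnifConvOnCompacts N (fun j => Qhat P m (k (s j))) g

/-- The Fatou set at time `m`. -/
def Fatou (P : ℕ → Polynomial ℂ) (m : ℕ) : Set (OnePoint ℂ) :=
  {z | ∃ N : Set (OnePoint ℂ), IsOpen N ∧ z ∈ N ∧ NormalOn P m N}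

/-- The iterated Julia set at time `m`. -/
def Julia (P : ℕ → Polynomial ℂ) (m : ℕ) : Set (OnePoint ℂ) :=
  (Fatou P m)ᶜ

/-- The basin at infinity at time `m`: points `z` with `Q_{m,n}(z) → ∞` as `n → ∞`
in the spherical metric. -/
def BasinInfty (P : ℕ → Polynomial ℂ) (m : ℕ) : Set (OnePoint ℂ) :=
  {z | Tendsto (fun n => sphDist (Qhat P m n z) ∞) atTop (𝓝 0)}

/-- The filled Julia set at time `m`. -/
def FilledJulia (P : ℕ → Polynomial ℂ) (m : ℕ) : Set (OnePoint ℂ) :=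
  (BasinInfty P m)ᶜ

/-- Inverse stereographic projection onto the unit sphere of `ℝ³`: `sphDist` is the chordal
distance between the images. -/
noncomputable def toSphere : OnePoint ℂ → EuclideanSpace ℝ (Fin 3)
  | (z : ℂ) => !₂[2 * z.re / (1 + ‖z‖ ^ 2), 2 * z.im / (1 + ‖z‖ ^ 2),
      (‖z‖ ^ 2 - 1) / (1 + ‖z‖ ^ 2)]
  | ∞ => !₂[0, 0, 1]

lemma sphDist_nonneg (x y : OnePoint ℂ) : 0 ≤ sphDist x y := by
  cases x <;> cases y <;> simp only [sphDist] <;> positivity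

lemma sphDist_eq_dist (x y : OnePoint ℂ) : sphDist x y = dist (toSphere x) (toSphere y) := by
  rw [EuclideanSpace.dist_eq, Fin.sum_univ_three, eq_comm,
    Real.sqrt_eq_iff_eq_sq (by positivity) (sphDist_nonneg x y)]
  cases x <;> cases y <;>
    simp only [sphDist, toSphere, Real.dist_eq, sq_abs, div_pow, mul_pow,
      Real.sq_sqrt (add_nonneg zero_le_one (sq_nonneg _))] <;>
    norm_num [Complex.sq_norm, Complex.normSq_apply, Matrix.cons_val_two, Matrix.tail_cons,
      Matrix.head_cons] <;>
    field_simp <;> ring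

lemma sphDist_triangle (x y z : OnePoint ℂ) : sphDist x z ≤ sphDist x y + sphDist y z := by
  simp only [sphDist_eq_dist, dist_triangle]

lemma sphDist_self (x : OnePoint ℂ) : sphDist x x = 0 := by
  rw [sphDist_eq_dist, dist_self]

lemma sphDist_coe_infty (x : ℂ) : sphDist x ∞ = 2 / √(1 + ‖x‖ ^ 2) := rfl

lemma sphDist_coe_infty_pos (x : ℂ) : 0 < sphDist x ∞ := by
  rw [sphDist_coe_infty]; positivity

lemma sphDist_coe_coe_le (x y : ℂ) : sphDist x y ≤ 2 * ‖x - y‖ := by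
  have one_le_sqrt (z : ℂ) : 1 ≤ √(1 + ‖z‖ ^ 2) :=
    Real.one_le_sqrt.2 (le_add_of_nonneg_right (sq_nonneg _))
  exact div_le_self (by positivity) (one_le_mul_of_one_le_of_one_le (one_le_sqrt x) (one_le_sqrt y))

lemma sphDist_coe_infty_le {x : ℂ} {q : ℝ} (hq : 0 < q) (hx : q ≤ ‖x‖) :
    sphDist x ∞ ≤ 2 / q := by
  rw [sphDist_coe_infty]
  refine div_le_div_of_nonneg_left zero_le_two hq (Real.le_sqrt_of_sq_le ?_)
  nlinarith

lemma le_sphDist_coe_infty {x : ℂ} {B : ℝ} (hx : ‖x‖ ≤ B) :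
    2 / √(1 + B ^ 2) ≤ sphDist x ∞ := by
  rw [sphDist_coe_infty]
  refine div_le_div_of_nonneg_left zero_le_two (by positivity) (Real.sqrt_le_sqrt ?_)
  nlinarith [norm_nonneg x]

lemma tendsto_sphDist_coe_infty_iff {ι : Type*} {l : Filter ι} {u : ι → ℂ} :
    Tendsto (fun i => sphDist (u i) ∞) l (𝓝 0) ↔ Tendsto (fun i => ‖u i‖) l atTop := by
  constructor
  · refine fun h => tendsto_atTop.2 fun B => ?_
    filter_upwards [h.eventually (gt_mem_nhds (by positivity : 0 < 2 / √(1 + B ^ 2)))] with i hi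
    by_contra! hlt
    exact (le_sphDist_coe_infty hlt.le).not_gt hi
  · refine fun h => squeeze_zero' (.of_forall fun i => sphDist_nonneg _ _) ?_
      (h.const_div_atTop 2)
    filter_upwards [h.eventually_gt_atTop 0] with i hi
    exact sphDist_coe_infty_le hi le_rfl

lemma UnifConvOnCompacts.tendsto_sphDist {N : Set (OnePoint ℂ)} {f : ℕ → OnePoint ℂ → OnePoint ℂ}
    {g : OnePoint ℂ → OnePoint ℂ} (h : UnifConvOnCompacts N f g) {w : OnePoint ℂ} (hw : w ∈ N) :
    Tendsto (fun j => sphDist (f j w) (g w)) atTop (𝓝 0) := by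
  refine Metric.tendsto_atTop.2 fun ε hε => ?_
  obtain ⟨j₀, hj₀⟩ := h {w} (Set.singleton_subset_iff.2 hw) isCompact_singleton ε hε
  exact ⟨j₀, fun j hj => by
    simpa [Real.dist_eq, abs_of_nonneg (sphDist_nonneg _ _)] using hj₀ j hj w rfl⟩

lemma UnifConvOnCompacts.eq_infty {N : Set (OnePoint ℂ)} {f : ℕ → OnePoint ℂ → OnePoint ℂ}
    {g : OnePoint ℂ → OnePoint ℂ} (h : UnifConvOnCompacts N f g) {w : OnePoint ℂ} (hw : w ∈ N)
    (hinf : Tendsto (fun j => sphDist (f j w) ∞) atTop (𝓝 0)) : g w = ∞ := by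
  have hg : Tendsto (fun j => toSphere (f j w)) atTop (𝓝 (toSphere (g w))) :=
    tendsto_iff_dist_tendsto_zero.2 (by simpa only [sphDist_eq_dist] using h.tendsto_sphDist hw)
  have hinf' : Tendsto (fun j => toSphere (f j w)) atTop (𝓝 (toSphere ∞)) :=
    tendsto_iff_dist_tendsto_zero.2 (by simpa only [sphDist_eq_dist] using hinf)
  have hzero : sphDist (g w) ∞ = 0 := by
    rw [sphDist_eq_dist, tendsto_nhds_unique hg hinf', dist_self]
  cases hgw : g w with
  | infty => rfl
  | coe x => exact absurd (hgw ▸ hzero) (sphDist_coe_infty_pos x).ne'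

section Compositions

variable (P : ℕ → Polynomial ℂ)

lemma Qc_of_le {m n : ℕ} (h : n ≤ m) : Qc P m n = id := by
  ext1 z
  simp [Qc, Nat.sub_eq_zero_of_le h]

lemma Qc_succ {m n : ℕ} (h : m ≤ n) (z : ℂ) : Qc P m (n + 1) z = (P (n + 1)).eval (Qc P m n z) := by
  simp only [Qc, Nat.succ_sub h, List.range_succ, List.foldl_append, List.foldl_cons,
    List.foldl_nil, Nat.add_sub_cancel' h]

lemma Qc_max (m n : ℕ) : Qc P m (max m n) = Qc P m n := by
  rcases le_total m n with h | h
  · rw [max_eq_right h]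
  · rw [max_eq_left h, Qc_of_le P le_rfl, Qc_of_le P h]

lemma differentiable_Qc (m n : ℕ) : Differentiable ℂ (Qc P m n) := by
  unfold Qc
  induction List.range (n - m) with
  | nil => exact differentiable_id
  | cons a l ih => exact ih.comp (Polynomial.differentiable _)

lemma continuous_Qc (m n : ℕ) : Continuous (Qc P m n) := (differentiable_Qc P m n).continuous

end Compositions

lemma Polynomial.norm_leadingCoeff_mul_sub_le_norm_eval (p : ℂ[X]) {M : ℝ}
    (hcoeff : ∀ k < p.natDegree, ‖p.coeff k‖ ≤ M) {z : ℂ} (hz : 1 ≤ ‖z‖) :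
    ‖p.leadingCoeff‖ * ‖z‖ ^ p.natDegree - p.natDegree * M * ‖z‖ ^ (p.natDegree - 1) ≤
      ‖p.eval z‖ := by
  set D := p.natDegree
  have htail : ‖∑ i ∈ Finset.range D, p.coeff i * z ^ i‖ ≤ D * M * ‖z‖ ^ (D - 1) :=
    calc ‖∑ i ∈ Finset.range D, p.coeff i * z ^ i‖
        ≤ ∑ i ∈ Finset.range D, ‖p.coeff i‖ * ‖z‖ ^ i := by
          simpa only [norm_mul, norm_pow] using
            norm_sum_le (Finset.range D) fun i => p.coeff i * z ^ i
      _ ≤ ∑ _i ∈ Finset.range D, M * ‖z‖ ^ (D - 1) := by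
          refine Finset.sum_le_sum fun i hi => ?_
          have hi := Finset.mem_range.1 hi
          exact mul_le_mul (hcoeff i hi) (pow_le_pow_right₀ hz (by omega)) (by positivity)
            ((norm_nonneg _).trans (hcoeff i hi))
      _ = D * M * ‖z‖ ^ (D - 1) := by rw [Finset.sum_const, Finset.card_range]; ring
  have hsplit : p.eval z = p.leadingCoeff * z ^ D + ∑ i ∈ Finset.range D, p.coeff i * z ^ i := by
    rw [Polynomial.eval_eq_sum_range, Finset.sum_range_succ, add_comm, Polynomial.leadingCoeff]
  calc ‖p.leadingCoeff‖ * ‖z‖ ^ D - D * M * ‖z‖ ^ (D - 1)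
      ≤ ‖p.leadingCoeff * z ^ D‖ - ‖∑ i ∈ Finset.range D, p.coeff i * z ^ i‖ := by
        rw [norm_mul, norm_pow]; linarith
    _ ≤ ‖p.eval z‖ := by rw [hsplit]; exact norm_sub_le_norm_add _ _

lemma Polynomial.two_mul_norm_le_norm_eval {p : ℂ[X]} {c M : ℝ} (hdeg : 2 ≤ p.natDegree)
    (hlead : c ≤ ‖p.leadingCoeff‖) (hcoeff : ∀ k < p.natDegree, ‖p.coeff k‖ ≤ M) {z : ℂ}
    (hz : 1 ≤ ‖z‖) (hcz : M * p.natDegree + 2 ≤ c * ‖z‖) : 2 * ‖z‖ ≤ ‖p.eval z‖ := by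
  set D := p.natDegree
  set A := ‖z‖ ^ (D - 1)
  have hpow : ‖z‖ ^ D = A * ‖z‖ := by rw [← pow_succ]; congr 1; omega
  have hA : ‖z‖ ≤ A := le_self_pow₀ hz (by omega)
  calc 2 * ‖z‖ ≤ A * (c * ‖z‖ - D * M) := by nlinarith
    _ ≤ ‖p.leadingCoeff‖ * ‖z‖ ^ D - D * M * A := by
        rw [hpow]; nlinarith [mul_le_mul_of_nonneg_right hlead (by positivity : 0 ≤ A * ‖z‖)]
    _ ≤ ‖p.eval z‖ := p.norm_leadingCoeff_mul_sub_le_norm_eval hcoeff hz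

/-- Beyond this radius every `P_n` at least doubles the modulus. -/
noncomputable def escapeRadius (d : ℕ) (K M : ℝ) : ℝ := max 1 (K * (M * d + 2))

lemma one_le_escapeRadius (d : ℕ) (K M : ℝ) : 1 ≤ escapeRadius d K M := le_max_left _ _

namespace IsBoundedSeq

variable {d : ℕ} {K M : ℝ} {P : ℕ → Polynomial ℂ} {m n : ℕ}

lemma K_pos (hP : IsBoundedSeq d K M P) : 0 < K := by
  obtain ⟨hdeg, -, -, hK, -⟩ := hP 1 le_rfl
  have hne : P 1 ≠ 0 := Polynomial.ne_zero_of_natDegree_gt hdeg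
  exact (norm_pos_iff.2 (Polynomial.leadingCoeff_ne_zero.2 hne)).trans_le hK

lemma M_nonneg (hP : IsBoundedSeq d K M P) : 0 ≤ M := by
  obtain ⟨hdeg, -, -, -, hcoeff⟩ := hP 1 le_rfl
  exact (norm_nonneg _).trans (hcoeff 0 (by omega))

lemma two_mul_norm_le_norm_eval (hP : IsBoundedSeq d K M P) (hn : 1 ≤ n) {z : ℂ}
    (hz : escapeRadius d K M ≤ ‖z‖) : 2 * ‖z‖ ≤ ‖(P n).eval z‖ := by
  obtain ⟨hdeg, hdd, hlead, -, hcoeff⟩ := hP n hn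
  refine Polynomial.two_mul_norm_le_norm_eval hdeg hlead hcoeff
    ((one_le_escapeRadius d K M).trans hz) ?_
  have hK := hP.K_pos
  have hMD : M * (P n).natDegree ≤ M * d := by gcongr; exact hP.M_nonneg
  rw [one_div, ← div_eq_inv_mul, le_div_iff₀ hK]
  nlinarith [(le_max_right _ _).trans hz]

lemma pow_two_mul_le_norm_Qc (hP : IsBoundedSeq d K M P) (hmn : m ≤ n) {z : ℂ}
    (hz : escapeRadius d K M ≤ ‖Qc P m n z‖) (j : ℕ) :
    2 ^ j * ‖Qc P m n z‖ ≤ ‖Qc P m (n + j) z‖ := by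
  induction j with
  | zero => simp
  | succ j ih =>
    have hbig : escapeRadius d K M ≤ ‖Qc P m (n + j) z‖ :=
      hz.trans ((le_mul_of_one_le_left (norm_nonneg _) (one_le_pow₀ one_le_two)).trans ih)
    rw [← add_assoc, Qc_succ P (by omega), pow_succ']
    calc 2 * 2 ^ j * ‖Qc P m n z‖ = 2 * (2 ^ j * ‖Qc P m n z‖) := mul_assoc _ _ _
      _ ≤ 2 * ‖Qc P m (n + j) z‖ := by gcongr
      _ ≤ _ := hP.two_mul_norm_le_norm_eval (by omega) hbig

lemma coe_mem_basinInfty (hP : IsBoundedSeq d K M P) (hmn : m ≤ n) {z : ℂ}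
    (hz : escapeRadius d K M ≤ ‖Qc P m n z‖) : (z : OnePoint ℂ) ∈ BasinInfty P m := by
  refine tendsto_sphDist_coe_infty_iff.2 ((tendsto_add_atTop_iff_nat n).1 ?_)
  have hpos : 0 < ‖Qc P m n z‖ := one_pos.trans_le ((one_le_escapeRadius d K M).trans hz)
  refine tendsto_atTop_mono (fun j => ?_)
    ((tendsto_pow_atTop_atTop_of_one_lt one_lt_two).atTop_mul_const hpos)
  rw [add_comm]
  exact hP.pow_two_mul_le_norm_Qc hmn hz j

lemma norm_Qc_le_of_mem_filledJulia (hP : IsBoundedSeq d K M P) {z : ℂ}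
    (hz : (z : OnePoint ℂ) ∈ FilledJulia P m) (n : ℕ) :
    ‖Qc P m n z‖ ≤ escapeRadius d K M := by
  by_contra! h
  exact hz (hP.coe_mem_basinInfty (le_max_left m n) (by rw [Qc_max]; exact h.le))

end IsBoundedSeq

lemma infty_mem_basinInfty (P : ℕ → Polynomial ℂ) (m : ℕ) : ∞ ∈ BasinInfty P m := by
  simp [BasinInfty, Qhat, sphDist_self]

lemma Nat.exists_strictMono_const_or_tendsto_atTop (k : ℕ → ℕ) :
    (∃ v, ∃ φ : ℕ → ℕ, StrictMono φ ∧ ∀ j, k (φ j) = v) ∨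
      ∃ φ : ℕ → ℕ, StrictMono φ ∧ Tendsto (k ∘ φ) atTop atTop := by
  by_cases hunbdd : ∀ B : ℕ, ∃ᶠ j in atTop, B < k j
  · obtain ⟨φ, hφ, hk⟩ := extraction_forall_of_frequently hunbdd
    exact .inr ⟨φ, hφ, tendsto_atTop_mono (fun j => (hk j).le) tendsto_id⟩
  · push Not at hunbdd
    obtain ⟨B, hB⟩ := hunbdd
    obtain ⟨v, hv⟩ : ∃ v, ∃ᶠ j in atTop, k j = v := by
      by_contra! h
      obtain ⟨j, hj, hjB⟩ :=
        (((Finset.range (B + 1)).eventually_all.2 fun v _ => h v).and hB).exists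
      exact hj (k j) (Finset.mem_range.2 (by omega)) rfl
    obtain ⟨φ, hφ, hk⟩ := extraction_of_frequently_atTop hv
    exact .inl ⟨v, φ, hφ, hk⟩

def escapeSet (P : ℕ → Polynomial ℂ) (m n : ℕ) (R : ℝ) : Set (OnePoint ℂ) :=
  ((↑) '' {z : ℂ | ‖Qc P m n z‖ ≤ R})ᶜ

section EscapeSet

variable {d : ℕ} {K M R : ℝ} {P : ℕ → Polynomial ℂ} {m n : ℕ}

lemma infty_mem_escapeSet : ∞ ∈ escapeSet P m n R := by simp [escapeSet]

lemma coe_mem_escapeSet {z : ℂ} : (z : OnePoint ℂ) ∈ escapeSet P m n R ↔ R < ‖Qc P m n z‖ := by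
  simp [escapeSet]

lemma exists_mem_escapeSet_of_mem_basinInfty {z : OnePoint ℂ} (hz : z ∈ BasinInfty P m)
    (R : ℝ) : ∃ n, m ≤ n ∧ z ∈ escapeSet P m n R := by
  cases z with
  | infty => exact ⟨m, le_rfl, infty_mem_escapeSet⟩
  | coe x =>
    obtain ⟨n, hmn, hn⟩ := ((eventually_ge_atTop m).and
      ((tendsto_sphDist_coe_infty_iff.1 hz).eventually_gt_atTop R)).exists
    exact ⟨n, hmn, coe_mem_escapeSet.2 hn⟩

lemma IsBoundedSeq.isOpen_escapeSet (hP : IsBoundedSeq d K M P) (hmn : m ≤ n) :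
    IsOpen (escapeSet P m n (escapeRadius d K M)) := by
  have hbdd : {z : ℂ | ‖Qc P m n z‖ ≤ escapeRadius d K M} ⊆
      Metric.closedBall 0 (escapeRadius d K M) := by
    intro z hz
    by_contra! hR
    rw [mem_closedBall_zero_iff, not_le] at hR
    have hgrow := hP.pow_two_mul_le_norm_Qc (le_refl m) (z := z)
      (by rw [Qc_of_le P le_rfl]; exact hR.le) (n - m)
    rw [Nat.add_sub_cancel' hmn, Qc_of_le P le_rfl, id] at hgrow
    linarith [le_mul_of_one_le_left (norm_nonneg z) (one_le_pow₀ (n := n - m) one_le_two),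
      hz.out]
  have hcpt : IsCompact {z : ℂ | ‖Qc P m n z‖ ≤ escapeRadius d K M} :=
    (isCompact_closedBall 0 _).of_isClosed_subset
      (isClosed_le (continuous_Qc P m n).norm continuous_const) hbdd
  exact (hcpt.image OnePoint.continuous_coe).isClosed.isOpen_compl

lemma IsBoundedSeq.escapeSet_subset_basinInfty (hP : IsBoundedSeq d K M P) (hmn : m ≤ n) :
    escapeSet P m n (escapeRadius d K M) ⊆ BasinInfty P m := by
  intro w hw
  cases w with
  | infty => exact infty_mem_basinInfty P m
  | coe x => exact hP.coe_mem_basinInfty hmn (coe_mem_escapeSet.1 hw).le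

lemma IsBoundedSeq.sphDist_Qhat_infty_le (hP : IsBoundedSeq d K M P) (hmn : m ≤ n) {n' : ℕ}
    (hn' : n ≤ n') {w : OnePoint ℂ} (hw : w ∈ escapeSet P m n (escapeRadius d K M)) :
    sphDist (Qhat P m n' w) ∞ ≤ 2 / 2 ^ (n' - n) := by
  cases w with
  | infty => simp [Qhat, sphDist_self]; positivity
  | coe x =>
    have hx := (coe_mem_escapeSet.1 hw).le
    have hgrow := hP.pow_two_mul_le_norm_Qc hmn hx (n' - n)
    rw [Nat.add_sub_cancel' hn'] at hgrow
    refine sphDist_coe_infty_le (by positivity) (le_trans ?_ hgrow)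
    exact le_mul_of_one_le_right (by positivity) ((one_le_escapeRadius d K M).trans hx)

lemma IsBoundedSeq.normalOn_escapeSet (hP : IsBoundedSeq d K M P) (hmn : m ≤ n) :
    NormalOn P m (escapeSet P m n (escapeRadius d K M)) := by
  intro k _
  rcases Nat.exists_strictMono_const_or_tendsto_atTop k with ⟨v, φ, hφ, hk⟩ | ⟨φ, hφ, hk⟩
  · refine ⟨φ, hφ, Qhat P m v, fun _ _ _ ε hε => ⟨0, fun j _ z _ => ?_⟩⟩
    simpa [hk j, sphDist_self] using hε
  · refine ⟨φ, hφ, fun _ => ∞, fun C hCN _ ε hε => ?_⟩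
    have hbound : Tendsto (fun j => (2 : ℝ) / 2 ^ (k (φ j) - n)) atTop (𝓝 0) :=
      ((tendsto_pow_atTop_atTop_of_one_lt one_lt_two).const_div_atTop 2).comp
        ((tendsto_sub_atTop_nat n).comp hk)
    obtain ⟨j₀, hj₀⟩ := eventually_atTop.1
      ((hbound.eventually (gt_mem_nhds hε)).and (hk.eventually_ge_atTop n))
    exact ⟨j₀, fun j hj z hz =>
      (hP.sphDist_Qhat_infty_le hmn (hj₀ j hj).2 (hCN hz)).trans_lt (hj₀ j hj).1⟩

lemma IsBoundedSeq.isOpen_basinInfty (hP : IsBoundedSeq d K M P) : IsOpen (BasinInfty P m) := by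
  refine isOpen_iff_forall_mem_open.2 fun z hz => ?_
  obtain ⟨n, hmn, hzn⟩ := exists_mem_escapeSet_of_mem_basinInfty hz (escapeRadius d K M)
  exact ⟨_, hP.escapeSet_subset_basinInfty hmn, hP.isOpen_escapeSet hmn, hzn⟩

lemma IsBoundedSeq.basinInfty_subset_fatou (hP : IsBoundedSeq d K M P) :
    BasinInfty P m ⊆ Fatou P m := by
  intro z hz
  obtain ⟨n, hmn, hzn⟩ := exists_mem_escapeSet_of_mem_basinInfty hz (escapeRadius d K M)
  exact ⟨_, hP.isOpen_escapeSet hmn, hzn, hP.normalOn_escapeSet hmn⟩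

end EscapeSet

/-- Cauchy's estimate for the derivative on circles of radius `r`. -/
lemma Complex.lipschitzOnWith_closedBall_of_norm_le {f : ℂ → ℂ} (hf : Differentiable ℂ f)
    {z₀ : ℂ} {r B : ℝ} (hr : 0 < r) (hB : ∀ x ∈ Metric.closedBall z₀ (2 * r), ‖f x‖ ≤ B) :
    LipschitzOnWith (B / r).toNNReal f (Metric.closedBall z₀ r) := by
  have hderiv (w : ℂ) (hw : w ∈ Metric.closedBall z₀ r) : ‖deriv f w‖ ≤ B / r := by
    refine Complex.norm_deriv_le_of_forall_mem_sphere_norm_le hr hf.diffContOnCl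
      fun ζ hζ => hB ζ ?_
    rw [Metric.mem_closedBall] at hw ⊢
    linarith [dist_triangle ζ w z₀, Metric.mem_sphere.1 hζ]
  refine LipschitzOnWith.of_dist_le' fun x hx y hy => ?_
  simpa only [dist_eq_norm] using (convex_closedBall z₀ r).norm_image_sub_le_of_norm_deriv_le
    (fun w _ => hf.differentiableAt) hderiv hy hx

/-- A sequential Montel theorem, via Arzelà–Ascoli. -/
theorem exists_tendstoUniformlyOn_closedBall_of_norm_le {u : ℕ → ℂ → ℂ}
    (hu : ∀ n, Differentiable ℂ (u n)) {z₀ : ℂ} {r B : ℝ} (hr : 0 < r)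
    (hB : ∀ n, ∀ x ∈ Metric.closedBall z₀ (2 * r), ‖u n x‖ ≤ B) :
    ∃ φ : ℕ → ℕ, StrictMono φ ∧ ∃ g : ℂ → ℂ,
      TendstoUniformlyOn (fun j => u (φ j)) g atTop (Metric.closedBall z₀ r) := by
  set S := Metric.closedBall z₀ r
  have : CompactSpace S := isCompact_iff_compactSpace.1 (isCompact_closedBall z₀ r)
  let F : ℕ → BoundedContinuousFunction S ℂ := fun n =>
    .mkOfCompact ⟨S.domRestrict (u n), (hu n).continuous.continuousOn.domRestrict⟩
  have hmaps : ∀ f x, f ∈ Set.range F → f x ∈ Metric.closedBall (0 : ℂ) B := by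
    rintro _ x ⟨n, rfl⟩
    rw [mem_closedBall_zero_iff]
    exact hB n x (Metric.closedBall_subset_closedBall (by linarith) x.2)
  have hequi : Equicontinuous ((↑) : Set.range F → S → ℂ) := by
    refine (LipschitzWith.uniformEquicontinuous _ (B / r).toNNReal ?_).equicontinuous
    rintro ⟨_, n, rfl⟩
    exact (Complex.lipschitzOnWith_closedBall_of_norm_le (hu n) hr (hB n)).to_restrict
  obtain ⟨g, -, φ, hφ, hlim⟩ := (BoundedContinuousFunction.arzela_ascoli _
    (isCompact_closedBall 0 B) _ hmaps hequi).isSeqCompact fun n => subset_closure ⟨n, rfl⟩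
  classical
  refine ⟨φ, hφ, fun x => if hx : x ∈ S then g ⟨x, hx⟩ else 0, ?_⟩
  rw [tendstoUniformlyOn_iff_tendstoUniformly_comp_coe]
  convert BoundedContinuousFunction.tendsto_iff_tendstoUniformly.1 hlim using 1
  · rfl
  · ext x
    simp [x.2]

lemma unifConvOnCompacts_of_tendstoUniformlyOn {u : ℕ → ℂ → ℂ} {g : ℂ → ℂ} {s : Set ℂ}
    (h : TendstoUniformlyOn u g atTop s) :
    UnifConvOnCompacts ((↑) '' s) (fun j => OnePoint.map (u j)) (OnePoint.map g) := by
  intro C hCs _ ε hε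
  obtain ⟨j₀, hj₀⟩ := eventually_atTop.1 (Metric.tendstoUniformlyOn_iff.1 h (ε / 2) (by positivity))
  refine ⟨j₀, fun j hj z hz => ?_⟩
  obtain ⟨x, hx, rfl⟩ := hCs hz
  have hclose : ‖u j x - g x‖ < ε / 2 := by
    rw [← dist_eq_norm, dist_comm]; exact hj₀ j hj x hx
  calc sphDist (OnePoint.map (u j) x) (OnePoint.map g x) ≤ 2 * ‖u j x - g x‖ :=
        sphDist_coe_coe_le _ _
    _ < ε := by linarith

lemma normalOn_image_ball_of_norm_Qc_le {P : ℕ → Polynomial ℂ} {m : ℕ} {z₀ : ℂ} {r B : ℝ}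
    (hr : 0 < r) (hB : ∀ n, ∀ x ∈ Metric.closedBall z₀ (2 * r), ‖Qc P m n x‖ ≤ B) :
    NormalOn P m ((↑) '' Metric.ball z₀ r) := by
  intro k _
  obtain ⟨φ, hφ, g, hg⟩ := exists_tendstoUniformlyOn_closedBall_of_norm_le
    (fun j => differentiable_Qc P m (k j)) hr fun j => hB (k j)
  exact ⟨φ, hφ, OnePoint.map g,
    unifConvOnCompacts_of_tendstoUniformlyOn (hg.mono Metric.ball_subset_closedBall)⟩

lemma IsBoundedSeq.interior_filledJulia_subset_fatou {d : ℕ} {K M : ℝ} {P : ℕ → Polynomial ℂ}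
    {m : ℕ} (hP : IsBoundedSeq d K M P) : interior (FilledJulia P m) ⊆ Fatou P m := by
  intro z hz
  cases z with
  | infty => exact absurd (infty_mem_basinInfty P m) (interior_subset hz)
  | coe z₀ =>
    obtain ⟨ρ, hρ, hball⟩ :=
      Metric.isOpen_iff.1 (isOpen_interior.preimage OnePoint.continuous_coe) z₀ hz
    refine ⟨(↑) '' Metric.ball z₀ (ρ / 3), OnePoint.isOpen_image_coe.2 Metric.isOpen_ball,
      ⟨z₀, Metric.mem_ball_self (by positivity), rfl⟩,
      normalOn_image_ball_of_norm_Qc_le (by positivity) fun n x hx =>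
        hP.norm_Qc_le_of_mem_filledJulia (interior_subset (hball ?_)) n⟩
    exact Metric.closedBall_subset_ball (by linarith) hx

/-- A limit function of the family is `∞` at the escaping points near `z` but stays away from `∞`
at `z`; a single iterate, being continuous, cannot be uniformly close to both. -/
lemma IsBoundedSeq.mem_basinInfty_of_mem_fatou_of_mem_closure {d : ℕ} {K M : ℝ}
    {P : ℕ → Polynomial ℂ} {m : ℕ} (hP : IsBoundedSeq d K M P) {z : OnePoint ℂ}
    (hF : z ∈ Fatou P m) (hz : z ∈ closure (BasinInfty P m)) : z ∈ BasinInfty P m := by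
  by_contra hzK
  obtain ⟨z₀, rfl⟩ :=
    OnePoint.ne_infty_iff_exists.1 fun h : z = ∞ => hzK (h ▸ infty_mem_basinInfty P m)
  set t := 2 / √(1 + escapeRadius d K M ^ 2)
  have ht : 0 < t := by positivity
  obtain ⟨N, hNo, hzN, hNnormal⟩ := hF
  obtain ⟨C, hCc, hzC, hCN⟩ := exists_compact_subset hNo hzN
  obtain ⟨s, hs, g, hconv⟩ := hNnormal (fun j => m + j) fun j => Nat.le_add_right m j
  obtain ⟨j₀, hj₀⟩ := hconv C hCN hCc (t / 2) (by positivity)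
  set Q := Qc P m (m + s j₀)
  have hfreq : ∃ᶠ x : ℂ in 𝓝 z₀, (x : OnePoint ℂ) ∈ BasinInfty P m := by
    rwa [mem_closure_iff_frequently, OnePoint.nhds_coe_eq, frequently_map] at hz
  have hnear : ∀ᶠ x : ℂ in 𝓝 z₀, (x : OnePoint ℂ) ∈ C ∧ 2 * ‖Q x - Q z₀‖ < t / 2 := by
    refine (OnePoint.continuous_coe.continuousAt.eventually_mem
      (mem_interior_iff_mem_nhds.1 hzC)).and ?_
    filter_upwards [Metric.tendsto_nhds.1 ((continuous_Qc P m (m + s j₀)).tendsto z₀) (t / 4)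
      (by positivity)] with x hx
    rw [← dist_eq_norm]; linarith
  obtain ⟨w, hwB, hwC, hwQ⟩ := (hfreq.and_eventually hnear).exists
  have hgw : g w = ∞ := hconv.eq_infty (hCN hwC)
    (hwB.comp (tendsto_atTop_mono (fun j => Nat.le_add_left (s j) m) hs.tendsto_atTop))
  have hQw : sphDist (Q w) ∞ < t / 2 := by
    have h := hj₀ j₀ le_rfl w hwC
    rwa [hgw] at h
  have hQz : t ≤ sphDist (Q z₀) ∞ :=
    le_sphDist_coe_infty (hP.norm_Qc_le_of_mem_filledJulia hzK _)
  have hQzw : sphDist (Q z₀) (Q w) < t / 2 := by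
    rw [← norm_neg, neg_sub] at hwQ
    exact (sphDist_coe_coe_le _ _).trans_lt hwQ
  linarith [sphDist_triangle (Q z₀) (Q w) ∞]

theorem frontier_filledJulia_eq_julia_general (d : ℕ) (K M : ℝ) (P : ℕ → Polynomial ℂ)
    (hP : IsBoundedSeq d K M P) :
    ∀ m : ℕ, frontier (FilledJulia P m) = Julia P m := by
  intro m
  rw [FilledJulia, frontier_compl, hP.isOpen_basinInfty.frontier_eq, Julia]
  ext z
  refine ⟨fun ⟨hcl, hB⟩ hF => hB (hP.mem_basinInfty_of_mem_fatou_of_mem_closure hF hcl),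
    fun hF => ⟨?_, fun hB => hF (hP.basinInfty_subset_fatou hB)⟩⟩
  by_contra hcl
  exact hF (hP.interior_filledJulia_subset_fatou (by rwa [FilledJulia, interior_compl]))

/-- The boundary of the filled Julia set at time `m` is the iterated Julia set at
time `m`: `∂K_m = J_m`. -/
theorem frontier_filledJulia_eq_julia (d : ℕ) (K M : ℝ) (hd : 2 ≤ d) (hK : 1 ≤ K)
    (hM : 0 ≤ M) (P : ℕ → Polynomial ℂ) (hP : IsBoundedSeq d K M P) :
    ∀ m : ℕ, frontier (FilledJulia P m) = Julia P m :=
  frontier_filledJulia_eq_julia_general d K M P hP
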